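/- Let X be a proper geodesic metric space, let G be a group acting on X by isometries, and let 𝒴 be a G-invariant family of nonempty closed subsets of X which is a peripheral structure for some D > 0: every Y ∈ 𝒴 is D-contracting, and diam(Π_Y(Y')) ≤ D for all distinct Y, Y' ∈ 𝒴. Then for every Y ∈ 𝒴, every g ∈ G and every x ∈ X such that gY ≠ Y, the set ⋃_{n∈ℕ} Π_Y(gⁿ x) is bounded. (This is the transversality assertion of the lemma that, when the automorphism is inner, any G-invariant peripheral structure is compatible.) -/
import Mathlib

/-- `c : [a,b] → X` is a geodesic. -/
def IsGeodesic {X : Type*} [MetricSpace X] (c : ℝ → X) (a b : ℝ) : Prop :=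
  a ≤ b ∧ ∀ s ∈ Set.Icc a b, ∀ t ∈ Set.Icc a b, dist (c s) (c t) = |s - t|

/-- Every two points are joined by a geodesic. -/
def GeodesicSpace (X : Type*) [MetricSpace X] : Prop :=
  ∀ x y : X, ∃ (a b : ℝ) (c : ℝ → X), IsGeodesic c a b ∧ c a = x ∧ c b = y

/-- The set of projections of the point `x` onto `Y`. -/
def projSet {X : Type*} [MetricSpace X] (Y : Set X) (x : X) : Set X :=
  {p | p ∈ Y ∧ dist x p = Metric.infDist x Y}

/-- `Π_Y(Z)`: the set of projections onto `Y` of points of `Z`. -/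
def projOn {X : Type*} [MetricSpace X] (Y Z : Set X) : Set X :=
  ⋃ z ∈ Z, projSet Y z

/-- The `A`-neighborhood `Y^{+A}` of `Y`. -/
def nbhd {X : Type*} [MetricSpace X] (Y : Set X) (A : ℝ) : Set X :=
  {x | Metric.infDist x Y ≤ A}

/-- `Y` is `D`-contracting: the projection onto `Y` of any geodesic staying at
distance at least `D` from `Y` has diameter at most `D`. -/
def IsContracting {X : Type*} [MetricSpace X] (D : ℝ) (Y : Set X) : Prop :=
  ∀ (c : ℝ → X) (a b : ℝ), IsGeodesic c a b →
    (∀ t ∈ Set.Icc a b, D ≤ Metric.infDist (c t) Y) →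
    EMetric.diam (projOn Y (c '' Set.Icc a b)) ≤ ENNReal.ofReal D

section Aux

variable {X : Type*} [MetricSpace X]

lemma mem_projOn {Y Z : Set X} {z p : X} (hz : z ∈ Z) (hp : p ∈ projSet Y z) :
    p ∈ projOn Y Z :=
  Set.mem_biUnion hz hp

lemma projSet_nonempty [ProperSpace X] {Y : Set X} (hcl : IsClosed Y) (hne : Y.Nonempty)
    (x : X) : (projSet Y x).Nonempty := by
  obtain ⟨y, hy, hdy⟩ := hcl.exists_infDist_eq_dist hne x
  exact ⟨y, hy, hdy.symm⟩

lemma isGeodesic_sub {c : ℝ → X} {a b a' b' : ℝ} (h : IsGeodesic c a b)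
    (ha : a ≤ a') (hb : b' ≤ b) (hab : a' ≤ b') : IsGeodesic c a' b' :=
  ⟨hab, fun s hs t ht => h.2 s ⟨ha.trans hs.1, hs.2.trans hb⟩ t ⟨ha.trans ht.1, ht.2.trans hb⟩⟩

lemma isGeodesic_rev {c : ℝ → X} {a b : ℝ} (h : IsGeodesic c a b) :
    IsGeodesic (fun t => c (a + b - t)) a b := by
  refine ⟨h.1, fun s hs t ht => ?_⟩
  have h1 : a + b - s ∈ Set.Icc a b := ⟨by linarith [hs.2], by linarith [hs.1]⟩
  have h2 : a + b - t ∈ Set.Icc a b := ⟨by linarith [ht.2], by linarith [ht.1]⟩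
  have h3 : (a + b - s) - (a + b - t) = t - s := by ring
  simp only []
  rw [h.2 _ h1 _ h2, h3, abs_sub_comm]

lemma dist_le_of_ediam_le {s : Set X} {D : ℝ} (hD : 0 ≤ D)
    (h : EMetric.diam s ≤ ENNReal.ofReal D) {p q : X} (hp : p ∈ s) (hq : q ∈ s) :
    dist p q ≤ D := by
  have h2 := (EMetric.edist_le_diam_of_mem hp hq).trans h
  rwa [edist_le_ofReal hD] at h2

/-- Entry lemma: if a geodesic ends within `D` of a `D`-contracting set `Y`, then the
projection of its starting point is within `2D` of a point of the geodesic that is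
within `D` of `Y`. -/
lemma entry_lemma [ProperSpace X] {Y : Set X} (hcl : IsClosed Y) (hne : Y.Nonempty)
    {D : ℝ} (hD : 0 < D) (hY : IsContracting D Y) {c : ℝ → X} {a b : ℝ}
    (hc : IsGeodesic c a b) (hb : Metric.infDist (c b) Y ≤ D)
    {p : X} (hp : p ∈ projSet Y (c a)) :
    ∃ t ∈ Set.Icc a b, Metric.infDist (c t) Y ≤ D ∧ dist p (c t) ≤ 2 * D := by
  by_cases ha : Metric.infDist (c a) Y ≤ D
  · refine ⟨a, ⟨le_refl a, hc.1⟩, ha, ?_⟩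
    have h1 : dist (c a) p ≤ D := hp.2.le.trans ha
    rw [dist_comm]; linarith
  · push_neg at ha
    set S : Set ℝ := {t | t ∈ Set.Icc a b ∧ Metric.infDist (c t) Y ≤ D} with hS
    have hbS : b ∈ S := ⟨⟨hc.1, le_refl b⟩, hb⟩
    have hSne : S.Nonempty := ⟨b, hbS⟩
    have hSbd : BddBelow S := ⟨a, fun t ht => ht.1.1⟩
    set t₀ := sInf S with ht₀def
    have ht₀a : a ≤ t₀ := le_csInf hSne fun t ht => ht.1.1
    have ht₀b : t₀ ≤ b := csInf_le hSbd hbS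
    have hlip : ∀ s ∈ Set.Icc a b, ∀ t ∈ Set.Icc a b,
        Metric.infDist (c s) Y ≤ Metric.infDist (c t) Y + |s - t| := by
      intro s hs t ht
      have h1 := Metric.infDist_le_infDist_add_dist (x := c s) (y := c t) (s := Y)
      rwa [hc.2 s hs t ht] at h1
    have ht₀mem : Metric.infDist (c t₀) Y ≤ D := by
      refine le_of_forall_pos_le_add fun ε hε => ?_
      obtain ⟨t, htS, htlt⟩ := Real.lt_sInf_add_pos hSne hε
      have h1 := hlip t₀ ⟨ht₀a, ht₀b⟩ t htS.1
      have h2 : t₀ ≤ t := csInf_le hSbd htS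
      have h3 : |t₀ - t| ≤ ε := by
        rw [abs_of_nonpos (by linarith)]; linarith
      linarith [htS.2]
    have hat : a < t₀ := by
      rcases lt_or_eq_of_le ht₀a with h | h
      · exact h
      · exfalso; rw [← h] at ht₀mem; linarith
    have hDt₀ : D ≤ Metric.infDist (c t₀) Y := by
      refine le_of_forall_pos_le_add fun ε hε => ?_
      set s := max a (t₀ - ε) with hsdef
      have hs1 : s < t₀ := max_lt hat (by linarith)
      have hsIcc : s ∈ Set.Icc a b := ⟨le_max_left _ _, hs1.le.trans ht₀b⟩
      have hsnot : ¬ Metric.infDist (c s) Y ≤ D := fun hmem =>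
        absurd (csInf_le hSbd ⟨hsIcc, hmem⟩) (not_le.2 hs1)
      have h1 := hlip s hsIcc t₀ ⟨ht₀a, ht₀b⟩
      have h2 : |s - t₀| ≤ ε := by
        rw [abs_of_nonpos (by linarith)]
        have h3 := le_max_right a (t₀ - ε)
        linarith
      linarith [not_le.1 hsnot]
    have hfar : ∀ t ∈ Set.Icc a t₀, D ≤ Metric.infDist (c t) Y := by
      intro t ht
      rcases lt_or_eq_of_le ht.2 with hlt2 | heq
      · have htI : t ∈ Set.Icc a b := ⟨ht.1, ht.2.trans ht₀b⟩
        have hnot : ¬ Metric.infDist (c t) Y ≤ D := fun hmem =>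
          absurd (csInf_le hSbd ⟨htI, hmem⟩) (not_le.2 hlt2)
        linarith [not_le.1 hnot]
      · rw [heq]; exact hDt₀
    have hdiam := hY c a t₀ (isGeodesic_sub hc le_rfl ht₀b ht₀a) hfar
    obtain ⟨q, hq⟩ := projSet_nonempty hcl hne (c t₀)
    have hpq : dist p q ≤ D := dist_le_of_ediam_le hD.le hdiam
      (mem_projOn ⟨a, ⟨le_refl a, ht₀a⟩, rfl⟩ hp)
      (mem_projOn ⟨t₀, ⟨ht₀a, le_refl t₀⟩, rfl⟩ hq)
    have hqt : dist q (c t₀) ≤ D := by rw [dist_comm]; exact hq.2.le.trans ht₀mem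
    refine ⟨t₀, ⟨ht₀a, ht₀b⟩, ht₀mem, ?_⟩
    calc dist p (c t₀) ≤ dist p q + dist q (c t₀) := dist_triangle _ _ _
    _ ≤ 2 * D := by linarith

/-- Projection onto a contracting set is coarsely Lipschitz. -/
lemma proj_lipschitz [ProperSpace X] (hX : GeodesicSpace X) {Y : Set X}
    (hcl : IsClosed Y) (hne : Y.Nonempty) {D : ℝ} (hD : 0 < D)
    (hY : IsContracting D Y) {z w p q : X}
    (hp : p ∈ projSet Y z) (hq : q ∈ projSet Y w) :
    dist p q ≤ dist z w + 4 * D := by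
  obtain ⟨a, b, c, hc, hca, hcb⟩ := hX z w
  by_cases h : ∀ t ∈ Set.Icc a b, D ≤ Metric.infDist (c t) Y
  · have hdiam := hY c a b hc h
    have h1 := dist_le_of_ediam_le hD.le hdiam
      (mem_projOn ⟨a, ⟨le_refl a, hc.1⟩, hca⟩ hp)
      (mem_projOn ⟨b, ⟨hc.1, le_refl b⟩, hcb⟩ hq)
    linarith [dist_nonneg (x := z) (y := w)]
  · push_neg at h
    obtain ⟨t₀, ht₀, hlt⟩ := h
    have hc1 : IsGeodesic c a t₀ := isGeodesic_sub hc le_rfl ht₀.2 ht₀.1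
    have hp' : p ∈ projSet Y (c a) := by rw [hca]; exact hp
    obtain ⟨t₁, ht₁, _, hpt₁⟩ := entry_lemma hcl hne hD hY hc1 hlt.le hp'
    set c' : ℝ → X := fun t => c (a + b - t) with hc'def
    have hcrev : IsGeodesic c' a b := isGeodesic_rev hc
    have hs₀ : a + b - t₀ ∈ Set.Icc a b := ⟨by linarith [ht₀.2], by linarith [ht₀.1]⟩
    have hc2 : IsGeodesic c' a (a + b - t₀) := isGeodesic_sub hcrev le_rfl hs₀.2 hs₀.1
    have hq' : q ∈ projSet Y (c' a) := by
      have he : c' a = w := by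
        rw [← hcb]; simp only [hc'def]; norm_num
      rw [he]; exact hq
    have hend : Metric.infDist (c' (a + b - t₀)) Y ≤ D := by
      have he : c' (a + b - t₀) = c t₀ := by simp only [hc'def]; norm_num
      rw [he]; exact hlt.le
    obtain ⟨s₁, hs₁, _, hqs₁⟩ := entry_lemma hcl hne hD hY hc2 hend hq'
    have hmem : a + b - s₁ ∈ Set.Icc a b := by
      constructor
      · linarith [hs₁.2, ht₀.1]
      · linarith [hs₁.1]
    have hd : dist (c t₁) (c' s₁) ≤ b - a := by
      have he : c' s₁ = c (a + b - s₁) := rfl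
      rw [he, hc.2 t₁ ⟨ht₁.1, ht₁.2.trans ht₀.2⟩ (a + b - s₁) hmem]
      rw [abs_le]
      constructor
      · linarith [ht₁.1, hmem.2]
      · linarith [ht₁.2.trans ht₀.2, hmem.1]
    have hzw : dist z w = b - a := by
      rw [← hca, ← hcb, hc.2 a ⟨le_rfl, hc.1⟩ b ⟨hc.1, le_rfl⟩, abs_sub_comm,
        abs_of_nonneg (by linarith [hc.1])]
    have h4 : dist (c' s₁) q ≤ 2 * D := by rw [dist_comm]; exact hqs₁
    calc dist p q ≤ dist p (c t₁) + dist (c t₁) (c' s₁) + dist (c' s₁) q :=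
      dist_triangle4 _ _ _ _
    _ ≤ dist z w + 4 * D := by rw [hzw]; linarith

/-- A closest point remains a closest point along the geodesic towards it. -/
lemma proj_along {W : Set X} {z q : X} (hq : q ∈ projSet W z) {c : ℝ → X} {a b : ℝ}
    (hc : IsGeodesic c a b) (hca : c a = z) (hcb : c b = q) {t : ℝ} (ht : t ∈ Set.Icc a b) :
    q ∈ projSet W (c t) := by
  have hd : dist (c t) q = b - t := by
    rw [← hcb, hc.2 t ht b ⟨hc.1, le_rfl⟩, abs_of_nonpos (by linarith [ht.2])]; ring
  have h1 : Metric.infDist z W ≤ Metric.infDist (c t) W + dist z (c t) :=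
    Metric.infDist_le_infDist_add_dist
  have h2 : dist z (c t) = t - a := by
    rw [← hca, hc.2 a ⟨le_rfl, hc.1⟩ t ht, abs_of_nonpos (by linarith [ht.1])]; ring
  have h3 : Metric.infDist z W = b - a := by
    rw [← hq.2, ← hca, ← hcb, hc.2 a ⟨le_rfl, hc.1⟩ b ⟨hc.1, le_rfl⟩,
      abs_of_nonpos (by linarith [hc.1])]; ring
  exact ⟨hq.1, le_antisymm (by rw [hd]; linarith)
    (Metric.infDist_le_dist_of_mem hq.1)⟩

/-- Behrstock-type inequality for two contracting sets. -/
lemma behrstock [ProperSpace X] (hX : GeodesicSpace X) {D : ℝ} (hD : 0 < D)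
    {Y W : Set X} (hclY : IsClosed Y) (hneY : Y.Nonempty) (hctrY : IsContracting D Y)
    (hclW : IsClosed W) (hneW : W.Nonempty) (hctrW : IsContracting D W)
    (z : X) :
    (∀ p ∈ projSet Y z, ∃ r ∈ projOn Y W, dist p r ≤ D) ∨
    (∀ p ∈ projSet W z, ∃ r ∈ projOn W Y, dist p r ≤ 9 * D) := by
  obtain ⟨q, hq⟩ := projSet_nonempty hclW hneW z
  obtain ⟨a, b, c, hc, hca, hcb⟩ := hX z q
  by_cases h : ∀ t ∈ Set.Icc a b, D ≤ Metric.infDist (c t) Y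
  · left
    intro p hp
    obtain ⟨r, hr⟩ := projSet_nonempty hclY hneY q
    refine ⟨r, mem_projOn hq.1 hr, ?_⟩
    have hdiam := hctrY c a b hc h
    exact dist_le_of_ediam_le hD.le hdiam
      (mem_projOn ⟨a, ⟨le_refl a, hc.1⟩, hca⟩ hp)
      (mem_projOn ⟨b, ⟨hc.1, le_refl b⟩, hcb⟩ hr)
  · right
    push_neg at h
    obtain ⟨t₀, ht₀, hlt⟩ := h
    intro p hp
    have hqe : q ∈ projSet W (c t₀) := proj_along hq hc hca hcb ht₀
    obtain ⟨y', hy'⟩ := projSet_nonempty hclY hneY (c t₀)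
    have hey' : dist (c t₀) y' ≤ D := hy'.2.le.trans hlt.le
    obtain ⟨r, hr⟩ := projSet_nonempty hclW hneW y'
    have h1 : dist q r ≤ dist (c t₀) y' + 4 * D :=
      proj_lipschitz hX hclW hneW hD hctrW hqe hr
    have h2 : dist p q ≤ dist z z + 4 * D :=
      proj_lipschitz hX hclW hneW hD hctrW hp hq
    rw [dist_self] at h2
    refine ⟨r, mem_projOn hy'.1 hr, ?_⟩
    calc dist p r ≤ dist p q + dist q r := dist_triangle _ _ _
    _ ≤ 9 * D := by linarith

variable {G : Type*} [Group G] [MulAction G X]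

lemma smul_infDist (hiso : ∀ g : G, Isometry (fun x : X => g • x)) (g : G) (x : X)
    (Y : Set X) :
    Metric.infDist (g • x) ((fun y : X => g • y) '' Y) = Metric.infDist x Y := by
  have key : ∀ (h : G) (z : X) (S : Set X),
      Metric.infDist (h • z) ((fun y : X => h • y) '' S) ≤ Metric.infDist z S := by
    intro h z S
    rcases S.eq_empty_or_nonempty with rfl | hS
    · simp
    · refine le_of_forall_pos_le_add fun ε hε => ?_
      obtain ⟨y, hyS, hy⟩ := (Metric.infDist_lt_iff hS).1
        (lt_add_of_pos_right _ hε)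
      have h1 : Metric.infDist (h • z) ((fun y : X => h • y) '' S) ≤ dist (h • z) (h • y) :=
        Metric.infDist_le_dist_of_mem (Set.mem_image_of_mem (fun y : X => h • y) hyS)
      have h2 : dist (h • z) (h • y) = dist z y := (hiso h).dist_eq z y
      rw [h2] at h1
      linarith
  refine le_antisymm (key g x Y) ?_
  have h2 := key g⁻¹ (g • x) ((fun y : X => g • y) '' Y)
  rw [inv_smul_smul] at h2
  have him : (fun y : X => g⁻¹ • y) '' ((fun y : X => g • y) '' Y) = Y := by
    rw [Set.image_image]; simp
  rwa [him] at h2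

lemma smul_projSet (hiso : ∀ g : G, Isometry (fun x : X => g • x)) (g : G) (x : X)
    (Y : Set X) :
    projSet ((fun y : X => g • y) '' Y) (g • x) = (fun y : X => g • y) '' projSet Y x := by
  ext p
  constructor
  · rintro ⟨⟨y, hyY, rfl⟩, hd⟩
    refine ⟨y, ⟨hyY, ?_⟩, rfl⟩
    rw [smul_infDist hiso g x Y] at hd
    have h2 : dist (g • x) (g • y) = dist x y := (hiso g).dist_eq x y
    rw [h2] at hd
    exact hd
  · rintro ⟨y, ⟨hyY, hd⟩, rfl⟩
    refine ⟨⟨y, hyY, rfl⟩, ?_⟩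
    have h2 : dist (g • x) (g • y) = dist x y := (hiso g).dist_eq x y
    rw [h2, hd, smul_infDist hiso g x Y]

lemma smul_projOn (hiso : ∀ g : G, Isometry (fun x : X => g • x)) (g : G)
    (Y Z : Set X) :
    projOn ((fun y : X => g • y) '' Y) ((fun y : X => g • y) '' Z) =
      (fun y : X => g • y) '' projOn Y Z := by
  unfold projOn
  rw [Set.biUnion_image, Set.image_iUnion₂]
  exact Set.iUnion₂_congr fun z _ => smul_projSet hiso g z Y

end Aux

theorem stmt17 {X : Type*} [MetricSpace X] [ProperSpace X] (hX : GeodesicSpace X)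
    {G : Type*} [Group G] [MulAction G X]
    (hiso : ∀ g : G, Isometry (fun x : X => g • x))
    (𝒴 : Set (Set X)) (D : ℝ) (hD : 0 < D)
    (hne : ∀ Y ∈ 𝒴, Y.Nonempty) (hcl : ∀ Y ∈ 𝒴, IsClosed Y)
    (hcontr : ∀ Y ∈ 𝒴, IsContracting D Y)
    (hsep : ∀ Y ∈ 𝒴, ∀ Y' ∈ 𝒴, Y ≠ Y' →
      EMetric.diam (projOn Y Y') ≤ ENNReal.ofReal D)
    (hinv : ∀ g : G, ∀ Y ∈ 𝒴, (fun x : X => g • x) '' Y ∈ 𝒴) :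
    ∀ Y ∈ 𝒴, ∀ g : G, ∀ x : X, (fun x : X => g • x) '' Y ≠ Y →
      Bornology.IsBounded (⋃ n : ℕ, projSet Y (g ^ n • x)) := by
  intro Y hY g x hgY
  have hYne : Y.Nonempty := hne Y hY
  have hYcl : IsClosed Y := hcl Y hY
  have hYctr : IsContracting D Y := hcontr Y hY
  have hWmem : (fun y : X => g • y) '' Y ∈ 𝒴 := hinv g Y hY
  have hW'mem : (fun y : X => g⁻¹ • y) '' Y ∈ 𝒴 := hinv g⁻¹ Y hY
  have hWcl : IsClosed ((fun y : X => g • y) '' Y) := hcl _ hWmem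
  have hWne : ((fun y : X => g • y) '' Y).Nonempty := hne _ hWmem
  have hWctr : IsContracting D ((fun y : X => g • y) '' Y) := hcontr _ hWmem
  -- `g '' (g⁻¹ '' Y) = Y`
  have him : (fun y : X => g • y) '' ((fun y : X => g⁻¹ • y) '' Y) = Y := by
    rw [Set.image_image]; simp
  have hW'ne : (fun y : X => g⁻¹ • y) '' Y ≠ Y := by
    intro hEq
    apply hgY
    have := congrArg (Set.image (fun y : X => g • y)) hEq
    rw [him] at this
    exact this.symm
  -- separation hypotheses
  have hsep1 : EMetric.diam (projOn Y ((fun y : X => g • y) '' Y)) ≤ ENNReal.ofReal D :=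
    hsep Y hY _ hWmem (Ne.symm hgY)
  have hsep2 : EMetric.diam (projOn Y ((fun y : X => g⁻¹ • y) '' Y)) ≤ ENNReal.ofReal D :=
    hsep Y hY _ hW'mem (Ne.symm hW'ne)
  -- base points
  obtain ⟨w₁, hw₁⟩ := hne _ hWmem
  obtain ⟨q₁, hq₁⟩ := projSet_nonempty hYcl hYne w₁
  have hq₁' : q₁ ∈ projOn Y ((fun y : X => g • y) '' Y) := mem_projOn hw₁ hq₁
  obtain ⟨w₂, hw₂⟩ := hne _ hW'mem
  obtain ⟨q₂, hq₂⟩ := projSet_nonempty hYcl hYne w₂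
  have hq₂' : q₂ ∈ projOn Y ((fun y : X => g⁻¹ • y) '' Y) := mem_projOn hw₂ hq₂
  obtain ⟨p₀, hp₀⟩ := projSet_nonempty hYcl hYne x
  -- the key claim
  have key : ∀ (n : ℕ) (p : X), p ∈ projSet Y (g ^ n • x) →
      p ∈ Metric.closedBall p₀ (4 * D) ∪ Metric.closedBall q₁ (2 * D) ∪
        Metric.closedBall q₂ (dist (g • x) x + 14 * D) := by
    intro n p hp
    match n with
    | 0 =>
      left; left
      rw [pow_zero, one_smul] at hp
      have h1 : dist p p₀ ≤ dist x x + 4 * D :=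
        proj_lipschitz hX hYcl hYne hD hYctr hp hp₀
      rw [dist_self] at h1
      simpa [Metric.mem_closedBall] using h1
    | (m + 1) =>
      rcases behrstock hX hD hYcl hYne hYctr hWcl hWne hWctr (g ^ (m+1) • x) with hB | hB
      · -- projection of `g^(m+1) x` on `Y` is near `Π_Y(gY)`
        left; right
        obtain ⟨r, hr, hpr⟩ := hB p hp
        have h1 : dist r q₁ ≤ D := dist_le_of_ediam_le hD.le hsep1 hr hq₁'
        rw [Metric.mem_closedBall]
        calc dist p q₁ ≤ dist p r + dist r q₁ := dist_triangle _ _ _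
        _ ≤ 2 * D := by linarith
      · right
        -- translate the right branch by g⁻¹
        obtain ⟨p'', hp''⟩ := projSet_nonempty hYcl hYne (g ^ m • x)
        have hgp'' : g • p'' ∈ projSet ((fun y : X => g • y) '' Y) (g ^ (m+1) • x) := by
          have he : g ^ (m+1) • x = g • (g ^ m • x) := by
            rw [pow_succ', mul_smul]
          rw [he, smul_projSet hiso g (g ^ m • x) Y]
          exact Set.mem_image_of_mem _ hp''
        obtain ⟨r, hr, hprr⟩ := hB (g • p'') hgp''
        -- rewrite `projOn (gY) Y` as `g '' projOn Y (g⁻¹Y)`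
        have hrOn : r ∈ (fun y : X => g • y) '' projOn Y ((fun y : X => g⁻¹ • y) '' Y) := by
          rw [← smul_projOn hiso g Y ((fun y : X => g⁻¹ • y) '' Y), him]
          exact hr
        obtain ⟨r', hr', rfl⟩ := hrOn
        have hdr : dist p'' r' ≤ 9 * D := by
          have h2 : dist (g • p'') (g • r') = dist p'' r' := (hiso g).dist_eq p'' r'
          rwa [h2] at hprr
        have hr'q₂ : dist r' q₂ ≤ D := dist_le_of_ediam_le hD.le hsep2 hr' hq₂'
        have hstep : dist (g ^ (m+1) • x) (g ^ m • x) = dist (g • x) x := by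
          have he : g ^ (m+1) • x = g ^ m • (g • x) := by
            rw [pow_succ, mul_smul]
          rw [he, (hiso (g ^ m)).dist_eq]
        have hpp'' : dist p p'' ≤ dist (g • x) x + 4 * D := by
          have h3 := proj_lipschitz hX hYcl hYne hD hYctr hp hp''
          rwa [hstep] at h3
        rw [Metric.mem_closedBall]
        calc dist p q₂ ≤ dist p p'' + dist p'' r' + dist r' q₂ := dist_triangle4 _ _ _ _
        _ ≤ dist (g • x) x + 14 * D := by linarith
  -- conclude
  apply Bornology.IsBounded.subset
    ((Metric.isBounded_closedBall.union Metric.isBounded_closedBall).union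
      Metric.isBounded_closedBall)
  rintro p hp
  simp only [Set.mem_iUnion] at hp
  obtain ⟨n, hpn⟩ := hp
  exact key n p hpn
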